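/- arXiv:2205.05579 — 3 statements merged into one kernel-verified Lean document; each statement's English description precedes it below -/
import Mathlib

section
/- Let ρ be Dickman's function. For all real x with 2 < x ≤ 3, ρ(x) = 1 − π²/12 − log x + (1/2)·(log x)² + Li₂(1/x). -/
/-!
On `[1, 2]` the delay equation reads `x ρ'(x) = -1`, so `ρ = 1 - log` there. On `[2, 3]` it
becomes `x ρ'(x) = log (x - 1) - 1`, which is also satisfied by the claimed closed form since
`(Li₂ (1 / x))' = log (1 - 1 / x) / x`; the two agree at `x = 2` by Euler's reflection formula
`Li₂ y + Li₂ (1 - y) + log y log (1 - y) = π² / 6` at `y = 1 / 2`. The reflection formula holds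
because its left side has derivative zero on `(0, 1)` and extends continuously to `y = 1`, where
it equals `Li₂ 1 = ζ(2)`.
-/

open Real

/-- The dilogarithm Li₂(y) = ∑_{n=1}^∞ yⁿ/n². -/
noncomputable def Li2 (y : ℝ) : ℝ := ∑' n : ℕ, y ^ (n + 1) / ((n : ℝ) + 1) ^ 2

open Set

theorem sub_eq_sub_of_hasDerivAt_eq {f g f' : ℝ → ℝ} {a b : ℝ} (hab : a ≤ b)
    (hfc : ContinuousOn f (Icc a b)) (hgc : ContinuousOn g (Icc a b))
    (hf : ∀ x ∈ Ioo a b, HasDerivAt f (f' x) x) (hg : ∀ x ∈ Ioo a b, HasDerivAt g (f' x) x) :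
    f b - f a = g b - g a := by
  rcases hab.eq_or_lt with rfl | hab
  · simp
  obtain ⟨c, -, hc⟩ := exists_hasDerivAt_eq_slope (f - g) 0 hab (hfc.sub hgc)
    fun x hx => by simpa using (hf x hx).sub (hg x hx)
  rw [Pi.zero_apply, eq_comm, div_eq_zero_iff, sub_eq_zero, Pi.sub_apply, Pi.sub_apply] at hc
  rcases hc with hc | hc <;> linarith

theorem hasSum_one_div_succ_sq : HasSum (fun n : ℕ => 1 / ((n : ℝ) + 1) ^ 2) (π ^ 2 / 6) := by
  simpa using (hasSum_nat_add_iff' 1).mpr hasSum_zeta_two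

@[simp] theorem Li2_zero : Li2 0 = 0 := by simp [Li2]

@[simp] theorem Li2_one : Li2 1 = π ^ 2 / 6 := by
  simpa [Li2] using hasSum_one_div_succ_sq.tsum_eq

theorem continuousOn_Li2 : ContinuousOn Li2 (Icc (-1) 1) := by
  refine continuousOn_tsum (fun n => (continuous_pow (n + 1)).continuousOn.div_const _)
    hasSum_one_div_succ_sq.summable fun n y hy => ?_
  rw [norm_div, norm_pow, Real.norm_of_nonneg (by positivity : (0 : ℝ) ≤ ((n : ℝ) + 1) ^ 2)]
  gcongr
  exact pow_le_one₀ (norm_nonneg _) (abs_le.mpr hy)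

theorem hasDerivAt_Li2_tsum {y : ℝ} (hy : |y| < 1) :
    HasDerivAt Li2 (∑' n : ℕ, y ^ n / ((n : ℝ) + 1)) y := by
  obtain ⟨r, hyr, hr1⟩ := exists_between hy
  have hr0 : 0 < r := (abs_nonneg y).trans_lt hyr
  refine hasDerivAt_tsum_of_isPreconnected (u := fun n : ℕ => r ^ n) (t := Ioo (-r) r)
    (g := fun n z => z ^ (n + 1) / ((n : ℝ) + 1) ^ 2) (g' := fun n z => z ^ n / ((n : ℝ) + 1))
    (summable_geometric_of_lt_one hr0.le hr1) isOpen_Ioo isPreconnected_Ioo (fun n z _ => ?_)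
    (fun n z hz => ?_) (y₀ := 0) ⟨by linarith, hr0⟩ (by simp) (abs_lt.mp hyr)
  · refine ((hasDerivAt_pow (n + 1) z).div_const (((n : ℝ) + 1) ^ 2)).congr_deriv ?_
    push_cast
    field_simp
  · rw [norm_div, norm_pow, Real.norm_of_nonneg (by positivity : (0 : ℝ) ≤ (n : ℝ) + 1)]
    calc ‖z‖ ^ n / ((n : ℝ) + 1) ≤ ‖z‖ ^ n := div_le_self (by positivity) (by simp)
      _ ≤ r ^ n := pow_le_pow_left₀ (norm_nonneg z) (abs_le.mpr ⟨hz.1.le, hz.2.le⟩) n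

theorem hasDerivAt_Li2 {y : ℝ} (hy : |y| < 1) (hy0 : y ≠ 0) :
    HasDerivAt Li2 (-log (1 - y) / y) y := by
  convert hasDerivAt_Li2_tsum hy using 1
  refine (((hasSum_pow_div_log_of_abs_lt_one hy).div_const y).congr_fun fun n => ?_).tsum_eq.symm
  rw [pow_succ]
  field_simp

theorem continuous_log_mul_log_one_sub : Continuous fun y : ℝ => log y * log (1 - y) := by
  set f := fun y : ℝ => log y * log (1 - y)
  have hreflect : Continuous fun y : ℝ => 1 - y := continuous_const.sub continuous_id
  have hf1 : ContinuousAt f 1 := by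
    -- `log y = (y - 1) * dslope log 1 y`, and `(y - 1) * log (1 - y) = -(u * log u)` with `u = 1 - y`
    have hf : f = fun y => dslope log 1 y * -((1 - y) * log (1 - y)) := by
      funext y
      have h := sub_smul_dslope log 1 y
      rw [smul_eq_mul, log_one, sub_zero] at h
      simp only [f, ← h]
      ring
    rw [hf]
    exact (continuousAt_dslope_same.mpr (differentiableAt_log one_ne_zero)).mul
      (continuous_mul_log.comp hreflect).neg.continuousAt
  have hf0 : ContinuousAt f 0 := by
    have hsymm : f = f ∘ fun y => 1 - y := by
      funext y
      simp only [f, Function.comp_apply, sub_sub_cancel, mul_comm]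
    rw [hsymm]
    exact ContinuousAt.comp (by rwa [sub_zero]) hreflect.continuousAt
  refine continuous_iff_continuousAt.mpr fun y => ?_
  rcases eq_or_ne y 0 with rfl | hy0
  · exact hf0
  rcases eq_or_ne y 1 with rfl | hy1
  · exact hf1
  exact (continuousAt_log hy0).mul
    ((continuousAt_log (sub_ne_zero.mpr hy1.symm)).comp hreflect.continuousAt)

theorem Li2_add_Li2_one_sub {y : ℝ} (hy0 : 0 < y) (hy1 : y < 1) :
    Li2 y + Li2 (1 - y) + log y * log (1 - y) = π ^ 2 / 6 := by
  set G := fun y => Li2 y + Li2 (1 - y) + log y * log (1 - y)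
  have hGc : ContinuousOn G (Icc y 1) := by
    refine (continuousOn_Li2.mono fun t ht => ⟨by linarith [ht.1], ht.2⟩).add ?_ |>.add
      continuous_log_mul_log_one_sub.continuousOn
    exact continuousOn_Li2.comp (continuousOn_const.sub continuousOn_id)
      fun t ht => ⟨by linarith [ht.2], by linarith [ht.1]⟩
  have hG' : ∀ t ∈ Ioo y 1, HasDerivAt G 0 t := by
    rintro t ⟨hyt, ht1⟩
    have ht0 : 0 < t := hy0.trans hyt
    have habs : ∀ s : ℝ, 0 < s → s < 1 → |s| < 1 := fun s h0 h1 => abs_lt.mpr ⟨by linarith, h1⟩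
    have hsub : HasDerivAt (fun s : ℝ => 1 - s) (-1) t := by
      simpa using (hasDerivAt_id t).const_sub 1
    have h := ((hasDerivAt_Li2 (habs t ht0 ht1) ht0.ne').add
      ((hasDerivAt_Li2 (habs (1 - t) (by linarith) (by linarith)) (by linarith)).comp t hsub)).add
      ((hasDerivAt_log ht0.ne').mul ((hasDerivAt_log (by linarith : 1 - t ≠ 0)).comp t hsub))
    refine h.congr_deriv ?_
    rw [sub_sub_cancel, Function.comp_apply]
    field_simp
    ring
  have := sub_eq_sub_of_hasDerivAt_eq hy1.le hGc continuousOn_const hG'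
    fun t _ => hasDerivAt_const t (0 : ℝ)
  simp only [G, Li2_one, sub_self, Li2_zero, log_one, zero_mul, add_zero] at this
  linarith

theorem Li2_one_half : Li2 (1 / 2) = π ^ 2 / 12 - log 2 ^ 2 / 2 := by
  have h := Li2_add_Li2_one_sub (y := 1 / 2) (by norm_num) (by norm_num)
  rw [show (1 : ℝ) - 1 / 2 = 1 / 2 by norm_num, one_div, log_inv] at h
  rw [one_div]
  linarith

theorem dickman_eq_one_sub_log {ρ : ℝ → ℝ} (hρ_init : ∀ x : ℝ, 0 ≤ x → x ≤ 1 → ρ x = 1)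
    (hρ_cont : ContinuousOn ρ (Ici 0))
    (hρ_dde : ∀ x : ℝ, 1 < x → HasDerivAt ρ (-(ρ (x - 1)) / x) x)
    {x : ℝ} (hx1 : 1 ≤ x) (hx2 : x ≤ 2) : ρ x = 1 - log x := by
  have h := sub_eq_sub_of_hasDerivAt_eq hx1 (hρ_cont.mono fun t ht => zero_le_one.trans ht.1)
    (g := fun t => 1 - log t)
    (continuousOn_const.sub (continuousOn_log.mono fun t ht => (zero_lt_one.trans_le ht.1).ne'))
    (fun t ht => hρ_dde t ht.1) fun t ht => by
      refine ((hasDerivAt_log (by linarith [ht.1])).const_sub 1).congr_deriv ?_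
      rw [hρ_init (t - 1) (by linarith [ht.1]) (by linarith [ht.2])]
      ring
  simp only [hρ_init 1 zero_le_one le_rfl, log_one] at h
  linarith

theorem hasDerivAt_dickman_formula_two_three {t : ℝ} (ht : 1 < t) :
    HasDerivAt (fun x => 1 - π ^ 2 / 12 - log x + 1 / 2 * log x ^ 2 + Li2 (1 / x))
      (-(1 - log (t - 1)) / t) t := by
  have ht0 : t ≠ 0 := by positivity
  have hinv : |1 / t| < 1 := by
    rwa [abs_of_pos (by positivity), div_lt_one (by positivity)]
  have hdiv : HasDerivAt (fun x : ℝ => 1 / x) (-(t ^ 2)⁻¹) t := by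
    simpa only [one_div] using hasDerivAt_inv ht0
  refine ((((hasDerivAt_log ht0).const_sub (1 - π ^ 2 / 12)).add
    (((hasDerivAt_log ht0).pow 2).const_mul (1 / 2))).add
    ((hasDerivAt_Li2 hinv (by positivity)).comp t hdiv)).congr_deriv ?_
  rw [one_sub_div ht0, log_div (by linarith) ht0]
  field_simp
  ring

theorem dickman_on_two_three_general
    (ρ : ℝ → ℝ)
    (hρ_init : ∀ x : ℝ, 0 ≤ x → x ≤ 1 → ρ x = 1)
    (hρ_cont : ContinuousOn ρ (Set.Ici 0))
    (hρ_dde : ∀ x : ℝ, 1 < x → HasDerivAt ρ (-(ρ (x - 1)) / x) x) :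
    ∀ x : ℝ, 2 < x → x ≤ 3 →
      ρ x = 1 - π ^ 2 / 12 - Real.log x + (1 / 2) * (Real.log x) ^ 2 + Li2 (1 / x) := by
  intro x hx2 hx3
  have hF : ∀ t ∈ Icc 2 x, HasDerivAt
      (fun x => 1 - π ^ 2 / 12 - log x + 1 / 2 * log x ^ 2 + Li2 (1 / x))
      (-(1 - log (t - 1)) / t) t := fun t ht => hasDerivAt_dickman_formula_two_three (by linarith [ht.1])
  have h := sub_eq_sub_of_hasDerivAt_eq hx2.le
    (hρ_cont.mono fun t ht => zero_le_two.trans ht.1)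
    (fun t ht => (hF t ht).continuousAt.continuousWithinAt)
    (fun t ht => hρ_dde t (by linarith [ht.1]))
    fun t ht => (hF t (Ioo_subset_Icc_self ht)).congr_deriv <| by
      rw [dickman_eq_one_sub_log hρ_init hρ_cont hρ_dde (by linarith [ht.1]) (by linarith [ht.2])]
  rw [dickman_eq_one_sub_log hρ_init hρ_cont hρ_dde one_le_two le_rfl, Li2_one_half] at h
  linarith

/-- Dickman's function satisfies
ρ(x) = 1 − π²/12 − log x + (1/2)(log x)² + Li₂(1/x) for 2 < x ≤ 3. -/
theorem dickman_on_two_three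
    (ρ : ℝ → ℝ)
    (hρ_neg : ∀ x < (0 : ℝ), ρ x = 0)
    (hρ_init : ∀ x : ℝ, 0 ≤ x → x ≤ 1 → ρ x = 1)
    (hρ_cont : ContinuousOn ρ (Set.Ici 0))
    (hρ_dde : ∀ x : ℝ, 1 < x → HasDerivAt ρ (-(ρ (x - 1)) / x) x) :
    ∀ x : ℝ, 2 < x → x ≤ 3 →
      ρ x = 1 - π ^ 2 / 12 - Real.log x + (1 / 2) * (Real.log x) ^ 2 + Li2 (1 / x) :=
  dickman_on_two_three_general ρ hρ_init hρ_cont hρ_dde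
end

section
/- Let σ be Watterson's function, and assume 0 ≤ σ(ξ) ≤ ξ^{−1/2} for all ξ > 0. Then for every real η > 0, the one-sided Laplace transform ∫₀^∞ e^{−ηξ}·σ(ξ) dξ equals √(π/η)·exp(−E(η)/2), where E(η) = ∫_η^∞ e^{−t}/t dt is the exponential integral. -/
/-!
Write `F η` for the Laplace transform of `σ`. Away from `ξ = 1` the delay equation says
`(ξ σ ξ)' = σ ξ / 2 - σ (ξ - 1) / 2` (on `(0, 1)` because `ξ σ ξ = √ξ` there), and `σ (ξ - 1)`
transforms into `e^{-η} F η`. Integrating `(e^{-ηξ} ξ σ ξ)'` over `(0, ∞)` therefore gives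
`η F' η = -(1 - e^{-η}) F η / 2`. Since `E' η = -e^{-η} / η`, the function `√η F η exp (E η / 2)`
has derivative zero, so it equals its limit at `∞`. There `E η → 0`, while `√η F η → Γ(1/2) = √π`:
after the scaling `ξ ↦ ξ / η` only the initial piece `σ ξ = ξ^{-1/2}` on `(0, 1]` survives.
-/

open Real MeasureTheory

/-- The exponential integral E(x) = ∫ₓ^∞ e^{−t}/t dt. -/
noncomputable def expInt (x : ℝ) : ℝ := ∫ t in Set.Ioi x, Real.exp (-t) / t

open Set Filter Topology

lemma integrableOn_exp_neg_div_Ioi {a : ℝ} (ha : 0 < a) :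
    IntegrableOn (fun t : ℝ => exp (-t) / t) (Ioi a) := by
  have hmeas : ContinuousOn (fun t : ℝ => exp (-t) / t) (Ioi a) :=
    (continuous_exp.comp continuous_neg).continuousOn.div continuousOn_id
      fun t ht => (ha.trans ht).ne'
  refine ((integrableOn_exp_neg_Ioi a).const_mul a⁻¹).mono'
    (hmeas.aestronglyMeasurable measurableSet_Ioi) ?_
  filter_upwards [ae_restrict_mem measurableSet_Ioi] with t ht
  rw [norm_div, norm_of_nonneg (exp_nonneg _), norm_of_nonneg (ha.trans ht).le, div_eq_inv_mul]
  gcongr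
  exact ht.le

lemma hasDerivAt_expInt {x : ℝ} (hx : 0 < x) : HasDerivAt expInt (-(exp (-x) / x)) x := by
  have ha : 0 < x / 2 := by positivity
  have hax : x / 2 < x := by linarith
  have hint := integrableOn_exp_neg_div_Ioi ha
  have hprim : HasDerivAt (fun y => ∫ t in x / 2..y, exp (-t) / t) (exp (-x) / x) x :=
    intervalIntegral.integral_hasDerivAt_right
      ((intervalIntegrable_iff_integrableOn_Ioc_of_le hax.le).2
        (hint.mono_set Ioc_subset_Ioi_self))
      ⟨Ioi (x / 2), Ioi_mem_nhds hax, hint.aestronglyMeasurable⟩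
      ((continuous_exp.comp continuous_neg).continuousAt.div continuousAt_id hx.ne')
  refine (((hasDerivAt_const x (expInt (x / 2))).sub hprim).congr_deriv (zero_sub _))
    |>.congr_of_eventuallyEq ?_
  filter_upwards [Ioi_mem_nhds hax] with y hy
  rw [Pi.sub_apply, expInt, expInt, ← intervalIntegral.integral_Ioi_sub_Ioi hint hy.le,
    sub_sub_cancel]

lemma expInt_nonneg {x : ℝ} (hx : 0 < x) : 0 ≤ expInt x :=
  setIntegral_nonneg measurableSet_Ioi fun _ ht => div_nonneg (exp_nonneg _) (hx.trans ht).le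

lemma expInt_le_exp_neg_div {x : ℝ} (hx : 0 < x) : expInt x ≤ exp (-x) / x := by
  calc expInt x ≤ ∫ t in Ioi x, x⁻¹ * exp (-t) :=
        setIntegral_mono_on (integrableOn_exp_neg_div_Ioi hx)
          ((integrableOn_exp_neg_Ioi x).const_mul _) measurableSet_Ioi
          fun t ht => by rw [div_eq_inv_mul]; gcongr; exact ht.le
    _ = exp (-x) / x := by rw [integral_const_mul, integral_exp_neg_Ioi, inv_mul_eq_div]

lemma tendsto_expInt_atTop : Tendsto expInt atTop (𝓝 0) :=
  squeeze_zero' (eventually_gt_atTop 0 |>.mono fun _ => expInt_nonneg)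
    (eventually_gt_atTop 0 |>.mono fun _ => expInt_le_exp_neg_div)
    (tendsto_exp_neg_atTop_nhds_zero.div_atTop tendsto_id)

lemma integral_Ioi_of_hasDerivAt_off_of_tendsto {φ φ' : ℝ → ℝ} {a c m : ℝ} (hac : a ≤ c)
    (hcont : ContinuousOn φ (Ici a)) (hderiv : ∀ x ∈ Ioi a, x ≠ c → HasDerivAt φ (φ' x) x)
    (hint : IntegrableOn φ' (Ioi a)) (hlim : Tendsto φ atTop (𝓝 m)) :
    ∫ x in Ioi a, φ' x = m - φ a := by
  have hleft : ∫ x in a..c, φ' x = φ c - φ a :=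
    intervalIntegral.integral_eq_sub_of_hasDerivAt_of_le hac (hcont.mono Icc_subset_Ici_self)
      (fun x hx => hderiv x hx.1 hx.2.ne)
      ((intervalIntegrable_iff_integrableOn_Ioc_of_le hac).2 (hint.mono_set Ioc_subset_Ioi_self))
  have hright : ∫ x in Ioi c, φ' x = m - φ c :=
    integral_Ioi_of_hasDerivAt_of_tendsto ((hcont c hac).mono (Ici_subset_Ici.2 hac))
      (fun x hx => hderiv x (hac.trans_lt hx) hx.ne') (hint.mono_set (Ioi_subset_Ioi hac)) hlim
  rw [← intervalIntegral.integral_interval_add_Ioi hint (hint.mono_set (Ioi_subset_Ioi hac)),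
    hleft, hright, sub_add_sub_cancel']

lemma integrableOn_rpow_mul_exp_neg_mul {s b : ℝ} (hs : -1 < s) (hb : 0 < b) :
    IntegrableOn (fun x : ℝ => x ^ s * exp (-b * x)) (Ioi 0) := by
  simpa using integrableOn_rpow_mul_exp_neg_mul_rpow hs one_pos hb

noncomputable def laplace (f : ℝ → ℝ) (η : ℝ) : ℝ := ∫ ξ in Ioi 0, exp (-η * ξ) * f ξ

lemma norm_rpow_mul_exp_neg_mul_mul_le {f : ℝ → ℝ} (hf_bdd : ∀ ξ, 0 < ξ → |f ξ| ≤ 1 / √ξ)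
    (p η : ℝ) {ξ : ℝ} (hξ : 0 < ξ) :
    ‖ξ ^ p * (exp (-η * ξ) * f ξ)‖ ≤ ξ ^ (p - 1 / 2) * exp (-η * ξ) := by
  rw [norm_mul, norm_mul, norm_of_nonneg (rpow_nonneg hξ.le p), norm_of_nonneg (exp_nonneg _),
    Real.norm_eq_abs, rpow_sub hξ, ← sqrt_eq_rpow]
  calc ξ ^ p * (exp (-η * ξ) * |f ξ|) ≤ ξ ^ p * (exp (-η * ξ) * (1 / √ξ)) := by
        gcongr; exact hf_bdd ξ hξ
    _ = ξ ^ p / √ξ * exp (-η * ξ) := by ring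

lemma integrableOn_rpow_mul_exp_neg_mul_mul {f : ℝ → ℝ} (hf : ContinuousOn f (Ioi 0))
    (hf_bdd : ∀ ξ, 0 < ξ → |f ξ| ≤ 1 / √ξ) {p η : ℝ} (hp : -(1 / 2) < p) (hη : 0 < η) :
    IntegrableOn (fun ξ => ξ ^ p * (exp (-η * ξ) * f ξ)) (Ioi 0) := by
  refine (integrableOn_rpow_mul_exp_neg_mul (s := p - 1 / 2) (by linarith) hη).mono' ?_ ?_
  · exact ((continuousOn_id.rpow_const fun x hx => Or.inl (ne_of_gt hx)).mul
      ((continuous_const.mul continuous_id).rexp.continuousOn.mul hf)).aestronglyMeasurable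
      measurableSet_Ioi
  · filter_upwards [ae_restrict_mem measurableSet_Ioi] with ξ hξ
    exact norm_rpow_mul_exp_neg_mul_mul_le hf_bdd p η hξ

lemma integrableOn_exp_neg_mul_mul {f : ℝ → ℝ} (hf : ContinuousOn f (Ioi 0))
    (hf_bdd : ∀ ξ, 0 < ξ → |f ξ| ≤ 1 / √ξ) {η : ℝ} (hη : 0 < η) :
    IntegrableOn (fun ξ => exp (-η * ξ) * f ξ) (Ioi 0) := by
  simpa using integrableOn_rpow_mul_exp_neg_mul_mul hf hf_bdd (p := 0) (by norm_num) hη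

lemma integrableOn_mul_exp_neg_mul_mul {f : ℝ → ℝ} (hf : ContinuousOn f (Ioi 0))
    (hf_bdd : ∀ ξ, 0 < ξ → |f ξ| ≤ 1 / √ξ) {η : ℝ} (hη : 0 < η) :
    IntegrableOn (fun ξ => ξ * (exp (-η * ξ) * f ξ)) (Ioi 0) := by
  simpa using integrableOn_rpow_mul_exp_neg_mul_mul hf hf_bdd (p := 1) (by norm_num) hη

lemma hasDerivAt_laplace {f : ℝ → ℝ} (hf : ContinuousOn f (Ioi 0))
    (hf_bdd : ∀ ξ, 0 < ξ → |f ξ| ≤ 1 / √ξ) {η : ℝ} (hη : 0 < η) :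
    HasDerivAt (laplace f) (-∫ ξ in Ioi 0, ξ * (exp (-η * ξ) * f ξ)) η := by
  have hη2 : 0 < η / 2 := by positivity
  have hres := hasDerivAt_integral_of_dominated_loc_of_deriv_le
    (F := fun x ξ => exp (-x * ξ) * f ξ) (F' := fun x ξ => -(ξ * (exp (-x * ξ) * f ξ)))
    (μ := volume.restrict (Ioi 0)) (bound := fun ξ => ξ ^ (1 - 1 / 2 : ℝ) * exp (-(η / 2) * ξ))
    (Metric.ball_mem_nhds η hη2)
    (Eventually.of_forall fun x => ((continuous_const.mul continuous_id).rexp.continuousOn.mul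
      hf).aestronglyMeasurable measurableSet_Ioi)
    (integrableOn_exp_neg_mul_mul hf hf_bdd hη)
    (integrableOn_mul_exp_neg_mul_mul hf hf_bdd hη).aestronglyMeasurable.neg ?_
    (integrableOn_rpow_mul_exp_neg_mul (by norm_num) hη2) ?_
  · rw [← integral_neg]
    exact hres.2
  · filter_upwards [ae_restrict_mem measurableSet_Ioi] with ξ hξ x hx
    have hx2 : η / 2 ≤ x := by linarith [(abs_lt.1 (mem_ball_iff_norm.1 hx)).1]
    calc ‖-(ξ * (exp (-x * ξ) * f ξ))‖ = ‖ξ ^ (1 : ℝ) * (exp (-x * ξ) * f ξ)‖ := by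
          rw [norm_neg, rpow_one]
      _ ≤ ξ ^ (1 - 1 / 2 : ℝ) * exp (-x * ξ) := norm_rpow_mul_exp_neg_mul_mul_le hf_bdd 1 x hξ
      _ ≤ ξ ^ (1 - 1 / 2 : ℝ) * exp (-(η / 2) * ξ) :=
          mul_le_mul_of_nonneg_left (exp_le_exp.2 (by nlinarith [mem_Ioi.1 hξ]))
            (rpow_nonneg (mem_Ioi.1 hξ).le _)
  · refine Eventually.of_forall fun ξ x _ => ?_
    have hlin : HasDerivAt (fun y : ℝ => -y * ξ) (-ξ) x := by
      simpa using (hasDerivAt_neg x).mul_const ξ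
    exact (hlin.exp.mul_const (f ξ)).congr_deriv (by ring)

lemma tendsto_exp_neg_mul_mul_self_mul_atTop {f : ℝ → ℝ} (hf_bdd : ∀ ξ, 0 < ξ → |f ξ| ≤ 1 / √ξ)
    {η : ℝ} (hη : 0 < η) : Tendsto (fun ξ => exp (-η * ξ) * (ξ * f ξ)) atTop (𝓝 0) := by
  refine squeeze_zero_norm' ?_ (tendsto_rpow_mul_exp_neg_mul_atTop_nhds_zero (1 - 1 / 2) η hη)
  filter_upwards [eventually_gt_atTop 0] with ξ hξ
  calc ‖exp (-η * ξ) * (ξ * f ξ)‖ = ‖ξ ^ (1 : ℝ) * (exp (-η * ξ) * f ξ)‖ := by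
        rw [rpow_one, mul_left_comm]
    _ ≤ ξ ^ (1 - 1 / 2 : ℝ) * exp (-η * ξ) := norm_rpow_mul_exp_neg_mul_mul_le hf_bdd 1 η hξ

lemma laplace_eq_integral {f : ℝ → ℝ} (hf : ∀ x ≤ 0, f x = 0) (η : ℝ) :
    laplace f η = ∫ ξ, exp (-η * ξ) * f ξ :=
  setIntegral_eq_integral_of_forall_compl_eq_zero fun x hx => by
    rw [hf x (not_lt.1 hx), mul_zero]

lemma laplace_comp_sub {f : ℝ → ℝ} (hf : ∀ x ≤ 0, f x = 0) {c : ℝ} (hc : 0 ≤ c) (η : ℝ) :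
    laplace (fun ξ => f (ξ - c)) η = exp (-η * c) * laplace f η := by
  rw [laplace_eq_integral hf, laplace_eq_integral (fun x hx => hf _ (by linarith)),
    ← integral_const_mul]
  calc ∫ ξ, exp (-η * ξ) * f (ξ - c)
      = ∫ ξ, (fun u => exp (-η * (u + c)) * f u) (ξ - c) := by simp only [sub_add_cancel]
    _ = ∫ ξ, exp (-η * c) * (exp (-η * ξ) * f ξ) := by
        rw [integral_sub_right_eq_self (fun u => exp (-η * (u + c)) * f u) c]
        simp only [mul_add, exp_add, mul_assoc, mul_left_comm (exp (-η * c))]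

lemma integrableOn_exp_neg_mul_mul_comp_sub {f : ℝ → ℝ} (hf : ∀ x ≤ 0, f x = 0) {c η : ℝ}
    (hint : IntegrableOn (fun ξ => exp (-η * ξ) * f ξ) (Ioi 0)) :
    IntegrableOn (fun ξ => exp (-η * ξ) * f (ξ - c)) (Ioi 0) := by
  have hint' : Integrable (fun ξ => exp (-η * ξ) * f ξ) := by
    refine (integrableOn_iff_integrable_of_support_subset fun x hx => ?_).1 hint
    by_contra hx0
    simp [hf x (not_lt.1 hx0)] at hx
  refine ((hint'.comp_sub_right c).const_mul (exp (-η * c))).integrableOn.congr_fun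
    (fun ξ _ => ?_) measurableSet_Ioi
  simp only [← mul_assoc, ← exp_add]
  ring_nf

lemma abs_laplace_sub_le {f g : ℝ → ℝ} {η C : ℝ} (hη : 0 < η)
    (hf : IntegrableOn (fun ξ => exp (-η * ξ) * f ξ) (Ioi 0))
    (hg : IntegrableOn (fun ξ => exp (-η * ξ) * g ξ) (Ioi 0))
    (hfg : EqOn f g (Ioc 0 1)) (hC : ∀ ξ, 1 < ξ → |f ξ - g ξ| ≤ C) :
    |laplace f η - laplace g η| ≤ C * exp (-η) / η := by
  have htail : laplace f η - laplace g η = ∫ ξ in Ioi 1, exp (-η * ξ) * (f ξ - g ξ) := by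
    rw [laplace, laplace, ← integral_sub hf hg]
    simp only [← mul_sub]
    refine setIntegral_eq_of_subset_of_forall_sdiff_eq_zero measurableSet_Ioi
      (Ioi_subset_Ioi zero_le_one) fun ξ hξ => ?_
    rw [hfg ⟨hξ.1, not_lt.1 hξ.2⟩, sub_self, mul_zero]
  have hexp : IntegrableOn (fun ξ => C * exp (-η * ξ)) (Ioi 1) :=
    (exp_neg_integrableOn_Ioi 1 hη).const_mul C
  calc |laplace f η - laplace g η| ≤ ∫ ξ in Ioi 1, C * exp (-η * ξ) := by
        rw [htail, ← Real.norm_eq_abs]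
        refine norm_integral_le_of_norm_le hexp ?_
        filter_upwards [ae_restrict_mem measurableSet_Ioi] with ξ hξ
        rw [norm_mul, norm_of_nonneg (exp_nonneg _), Real.norm_eq_abs, mul_comm]
        gcongr
        exact hC ξ hξ
    _ = C * exp (-η) / η := by
        rw [integral_const_mul, integral_exp_mul_Ioi (neg_lt_zero.2 hη)]
        field_simp

lemma sqrt_mul_laplace_one_div_sqrt {η : ℝ} (hη : 0 < η) :
    √η * laplace (fun ξ => 1 / √ξ) η = √π := by
  have h := integral_rpow_mul_exp_neg_mul_Ioi (a := 1 / 2) (by norm_num) hη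
  rw [Gamma_one_half_eq, ← sqrt_eq_rpow, sqrt_div' 1 hη.le, sqrt_one] at h
  have hintegrand :
      laplace (fun ξ => 1 / √ξ) η = ∫ t in Ioi 0, t ^ (1 / 2 - 1 : ℝ) * exp (-(η * t)) := by
    refine setIntegral_congr_fun measurableSet_Ioi fun ξ hξ => ?_
    rw [show (1 / 2 - 1 : ℝ) = -(1 / 2) by norm_num, rpow_neg (mem_Ioi.1 hξ).le, ← sqrt_eq_rpow,
      neg_mul]
    beta_reduce
    rw [one_div, mul_comm]
  rw [hintegrand, h]
  field_simp [(sqrt_pos.2 hη).ne']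

lemma tendsto_sqrt_mul_laplace {f : ℝ → ℝ} (hf : ContinuousOn f (Ioi 0))
    (hf_init : ∀ x, 0 < x → x ≤ 1 → f x = 1 / √x) (hf_bdd : ∀ ξ, 0 < ξ → |f ξ| ≤ 1 / √ξ) :
    Tendsto (fun η => √η * laplace f η) atTop (𝓝 √π) := by
  have hg_cont : ContinuousOn (fun ξ : ℝ => 1 / √ξ) (Ioi 0) :=
    continuousOn_const.div continuous_sqrt.continuousOn fun ξ hξ => (sqrt_pos.2 hξ).ne'
  have hg_bdd : ∀ ξ : ℝ, 0 < ξ → |1 / √ξ| ≤ 1 / √ξ := fun ξ _ => (abs_of_nonneg (by positivity)).le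
  have hg_le_one : ∀ ξ : ℝ, 1 < ξ → 1 / √ξ ≤ 1 := fun ξ hξ =>
    (div_le_one (sqrt_pos.2 (zero_lt_one.trans hξ))).2 (one_le_sqrt.2 hξ.le)
  have hclose : ∀ η : ℝ, 1 ≤ η → |√η * laplace f η - √π| ≤ 2 * exp (-η) := by
    intro η hη1
    have hη : 0 < η := zero_lt_one.trans_le hη1
    have hlap := abs_laplace_sub_le (C := 2) hη (integrableOn_exp_neg_mul_mul hf hf_bdd hη)
      (integrableOn_exp_neg_mul_mul hg_cont hg_bdd hη) (fun ξ hξ => hf_init ξ hξ.1 hξ.2)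
      fun ξ hξ => by
        have hξ0 := zero_lt_one.trans hξ
        linarith [abs_sub (f ξ) (1 / √ξ), hf_bdd ξ hξ0, hg_bdd ξ hξ0, hg_le_one ξ hξ]
    rw [← sqrt_mul_laplace_one_div_sqrt hη, ← mul_sub, abs_mul, abs_of_nonneg (sqrt_nonneg _)]
    calc √η * |laplace f η - laplace (fun ξ => 1 / √ξ) η| ≤ √η * (2 * exp (-η) / η) := by
          gcongr
      _ ≤ η * (2 * exp (-η) / η) := by
          gcongr
          nlinarith [sq_sqrt hη.le, sqrt_nonneg η]
      _ = 2 * exp (-η) := by field_simp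
  rw [tendsto_iff_norm_sub_tendsto_zero]
  exact squeeze_zero' (Eventually.of_forall fun _ => norm_nonneg _)
    (eventually_ge_atTop 1 |>.mono hclose)
    (by simpa using tendsto_exp_neg_atTop_nhds_zero.const_mul 2)

section Watterson

variable {σ : ℝ → ℝ}

/-- At `ξ = 1` the right derivative is infinite, as `σ (ξ - 1) → ∞` when `ξ → 1⁺`. -/
lemma hasDerivAt_mul_watterson (hσ_nonpos : ∀ x ≤ (0 : ℝ), σ x = 0)
    (hσ_init : ∀ x : ℝ, 0 < x → x ≤ 1 → σ x = 1 / √x)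
    (hσ_dde : ∀ x : ℝ, 1 < x → HasDerivAt σ (-(σ x / 2 + σ (x - 1) / 2) / x) x)
    {ξ : ℝ} (hξ : 0 < ξ) (hξ1 : ξ ≠ 1) :
    HasDerivAt (fun x => x * σ x) (σ ξ / 2 - σ (ξ - 1) / 2) ξ := by
  rcases hξ1.lt_or_gt with hξ1 | hξ1
  · have heq : (fun x => √x) =ᶠ[𝓝 ξ] fun x => x * σ x := by
      filter_upwards [Ioo_mem_nhds hξ hξ1] with x hx
      rw [hσ_init x hx.1 hx.2.le, mul_one_div, div_sqrt]
    refine ((hasDerivAt_sqrt hξ.ne').congr_of_eventuallyEq heq.symm).congr_deriv ?_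
    rw [hσ_init ξ hξ hξ1.le, hσ_nonpos (ξ - 1) (by linarith)]
    ring
  · refine ((hasDerivAt_id ξ).mul (hσ_dde ξ hξ1)).congr_deriv ?_
    simp only [id]
    field_simp
    ring

lemma continuousOn_mul_watterson (hσ_init : ∀ x : ℝ, 0 < x → x ≤ 1 → σ x = 1 / √x)
    (hσ_cont : ContinuousOn σ (Ioi 0)) : ContinuousOn (fun x => x * σ x) (Ici 0) := by
  intro x hx
  rcases (mem_Ici.1 hx).eq_or_lt with rfl | hx
  · have hsqrt : ∀ y ∈ Icc (0 : ℝ) 1, y * σ y = √y := by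
      rintro y ⟨hy0, hy1⟩
      rcases hy0.eq_or_lt with rfl | hy0
      · simp
      · rw [hσ_init y hy0 hy1, mul_one_div, div_sqrt]
    exact (continuous_sqrt.continuousWithinAt.congr hsqrt (by simp)).mono_of_mem_nhdsWithin
      (Icc_mem_nhdsGE zero_lt_one)
  · exact (continuousAt_id.mul (hσ_cont.continuousAt (Ioi_mem_nhds hx))).continuousWithinAt

lemma integral_mul_exp_neg_mul_watterson (hσ_nonpos : ∀ x ≤ (0 : ℝ), σ x = 0)
    (hσ_init : ∀ x : ℝ, 0 < x → x ≤ 1 → σ x = 1 / √x) (hσ_cont : ContinuousOn σ (Ioi 0))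
    (hσ_dde : ∀ x : ℝ, 1 < x → HasDerivAt σ (-(σ x / 2 + σ (x - 1) / 2) / x) x)
    (hσ_abs : ∀ ξ, 0 < ξ → |σ ξ| ≤ 1 / √ξ) {η : ℝ} (hη : 0 < η) :
    ∫ ξ in Ioi 0, ξ * (exp (-η * ξ) * σ ξ) = (1 - exp (-η)) / (2 * η) * laplace σ η := by
  have hA := integrableOn_exp_neg_mul_mul hσ_cont hσ_abs hη
  have hB := integrableOn_exp_neg_mul_mul_comp_sub (c := 1) hσ_nonpos hA
  have hC := integrableOn_mul_exp_neg_mul_mul hσ_cont hσ_abs hη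
  have hAB : IntegrableOn (fun ξ => 1 / 2 * (exp (-η * ξ) * σ ξ)
      - 1 / 2 * (exp (-η * ξ) * σ (ξ - 1))) (Ioi 0) := (hA.const_mul _).sub (hB.const_mul _)
  have hexp : ∀ ξ : ℝ, HasDerivAt (fun x => exp (-η * x)) (-η * exp (-η * ξ)) ξ := fun ξ => by
    simpa [mul_comm] using ((hasDerivAt_id ξ).const_mul (-η)).exp
  have hftc := integral_Ioi_of_hasDerivAt_off_of_tendsto (a := 0) (c := 1)
    (φ := fun ξ => exp (-η * ξ) * (ξ * σ ξ))
    (φ' := fun ξ => 1 / 2 * (exp (-η * ξ) * σ ξ) - 1 / 2 * (exp (-η * ξ) * σ (ξ - 1))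
      - η * (ξ * (exp (-η * ξ) * σ ξ)))
    zero_le_one
    ((continuous_const.mul continuous_id).rexp.continuousOn.mul
      (continuousOn_mul_watterson hσ_init hσ_cont))
    (fun ξ hξ hξ1 => ((hexp ξ).mul (hasDerivAt_mul_watterson hσ_nonpos hσ_init hσ_dde hξ hξ1))
      |>.congr_deriv (by ring))
    (hAB.sub (hC.const_mul η))
    (tendsto_exp_neg_mul_mul_self_mul_atTop hσ_abs hη)
  rw [integral_sub hAB (hC.const_mul η),
    integral_sub (hA.const_mul _) (hB.const_mul _), integral_const_mul, integral_const_mul,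
    integral_const_mul] at hftc
  have hshift := laplace_comp_sub hσ_nonpos zero_le_one η
  rw [laplace, laplace, mul_one] at hshift
  rw [hshift, ← laplace, zero_mul, mul_zero, sub_zero] at hftc
  rw [div_mul_eq_mul_div, eq_div_iff (by positivity)]
  linarith

lemma hasDerivAt_laplace_watterson (hσ_nonpos : ∀ x ≤ (0 : ℝ), σ x = 0)
    (hσ_init : ∀ x : ℝ, 0 < x → x ≤ 1 → σ x = 1 / √x) (hσ_cont : ContinuousOn σ (Ioi 0))
    (hσ_dde : ∀ x : ℝ, 1 < x → HasDerivAt σ (-(σ x / 2 + σ (x - 1) / 2) / x) x)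
    (hσ_abs : ∀ ξ, 0 < ξ → |σ ξ| ≤ 1 / √ξ) {η : ℝ} (hη : 0 < η) :
    HasDerivAt (laplace σ) (-((1 - exp (-η)) / (2 * η)) * laplace σ η) η := by
  rw [neg_mul, ← integral_mul_exp_neg_mul_watterson hσ_nonpos hσ_init hσ_cont hσ_dde hσ_abs hη]
  exact hasDerivAt_laplace hσ_cont hσ_abs hη

end Watterson

lemma eq_div_sqrt_mul_exp_expInt_of_hasDerivAt {F : ℝ → ℝ} {L : ℝ}
    (hF : ∀ x, 0 < x → HasDerivAt F (-((1 - exp (-x)) / (2 * x)) * F x) x)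
    (hlim : Tendsto (fun x => √x * F x) atTop (𝓝 L)) {x : ℝ} (hx : 0 < x) :
    F x = L / √x * exp (-expInt x / 2) := by
  set G : ℝ → ℝ := fun y => √y * F y * exp (expInt y / 2)
  have hG' : ∀ y, 0 < y → HasDerivAt G 0 y := by
    intro y hy
    refine (((hasDerivAt_sqrt hy.ne').mul (hF y hy)).mul
      ((hasDerivAt_expInt hy).div_const 2).exp).congr_deriv ?_
    have hs : √y ^ 2 = y := sq_sqrt hy.le
    simp only [Pi.mul_apply]
    field_simp
    rw [hs]
    ring
  have hconst : ∀ y, x ≤ y → G y = G x := fun y hy =>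
    isOpen_Ioi.is_const_of_deriv_eq_zero isPreconnected_Ioi
      (fun z hz => (hG' z hz).differentiableAt.differentiableWithinAt)
      (fun z hz => (hG' z hz).deriv) (hx.trans_le hy) hx
  have hGlim : Tendsto G atTop (𝓝 L) := by
    have hE : Tendsto (fun y => expInt y / 2) atTop (𝓝 0) := by
      simpa using tendsto_expInt_atTop.div_const 2
    simpa using hlim.mul ((continuous_exp.tendsto 0).comp hE)
  have hGx : G x = L := tendsto_nhds_unique
    (tendsto_const_nhds.congr' (eventually_ge_atTop x |>.mono fun y hy => (hconst y hy).symm)) hGlim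
  rw [← hGx, neg_div, exp_neg]
  field_simp [(sqrt_pos.2 hx).ne']
  ring

/-- The one-sided Laplace transform of Watterson's function is
√(π/η)·exp(−E(η)/2) for η > 0. -/
theorem laplace_watterson
    (σ : ℝ → ℝ)
    (hσ_nonpos : ∀ x ≤ (0 : ℝ), σ x = 0)
    (hσ_init : ∀ x : ℝ, 0 < x → x ≤ 1 → σ x = 1 / Real.sqrt x)
    (hσ_cont : ContinuousOn σ (Set.Ioi 0))
    (hσ_dde : ∀ x : ℝ, 1 < x → HasDerivAt σ (-(σ x / 2 + σ (x - 1) / 2) / x) x)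
    (hσ_bdd : ∀ ξ : ℝ, 0 < ξ → 0 ≤ σ ξ ∧ σ ξ ≤ 1 / Real.sqrt ξ)
    (η : ℝ) (hη : 0 < η) :
    ∫ ξ in Set.Ioi (0 : ℝ), Real.exp (-η * ξ) * σ ξ =
      Real.sqrt (π / η) * Real.exp (-expInt η / 2) := by
  have hσ_abs : ∀ ξ, 0 < ξ → |σ ξ| ≤ 1 / √ξ := fun ξ hξ =>
    (abs_of_nonneg (hσ_bdd ξ hξ).1).trans_le (hσ_bdd ξ hξ).2
  rw [sqrt_div pi_pos.le]
  exact eq_div_sqrt_mul_exp_expInt_of_hasDerivAt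
    (fun x hx => hasDerivAt_laplace_watterson hσ_nonpos hσ_init hσ_cont hσ_dde hσ_abs hx)
    (tendsto_sqrt_mul_laplace hσ_cont hσ_init hσ_abs) hη
end

section
/- Fix a real b > 0. For every real η > 0, ∫₀^∞ e^{−ηξ}·(1/(2ξ))·(2/√π)·∫_{√(b/(2ξ))}^∞ e^{−t²} dt dξ = E(√(2·b·η)), where E(x) = ∫ₓ^∞ e^{−t}/t dt is the exponential integral. (That is, E(√(2bη)) is the one-sided Laplace transform of ξ ↦ (1/(2ξ))·erfc(√(b/(2ξ))).) -/
open Real MeasureTheory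

/-!
Substituting `ξ = x² / η` and then `t = y / x` turns the left-hand side into
`(2 / √π) ∫₀^∞ ∫_c^∞ e^{-(x² + y²/x²)} / x² dy dx` with `c = √(bη/2)`. After exchanging the
integrals, the inner integral is `1 / y` times Glasser's integral
`∫₀^∞ e^{-(x² + y²/x²)} dx = (√π / 2) e^{-2y}`, which follows from the substitution
`u = x - y / x` once the integrand is symmetrised under `x ↦ y / x`. What remains,
`∫_c^∞ e^{-2y} / y dy`, is `E(2c)`.
-/

open Set

section Substitution

variable {E : Type*} [NormedAddCommGroup E] [NormedSpace ℝ E] {m : ℝ}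

lemma involutive_const_div (hm : m ≠ 0) : Function.Involutive (m / · : ℝ → ℝ) :=
  fun _ => div_div_cancel₀ hm

lemma image_const_div_Ioi_zero (hm : 0 < m) : (m / ·) '' Ioi (0 : ℝ) = Ioi 0 := by
  rw [(involutive_const_div hm.ne').image_eq_preimage_symm]
  ext x
  exact div_pos_iff_of_pos_left hm

lemma hasDerivWithinAt_const_div {s : Set ℝ} {x : ℝ} (hx : x ≠ 0) :
    HasDerivWithinAt (m / ·) (-(m / x ^ 2)) s x := by
  simpa [div_eq_mul_inv] using ((hasDerivAt_inv hx).const_mul m).hasDerivWithinAt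

lemma integral_Ioi_div_sq_smul_comp_const_div (hm : 0 < m) (f : ℝ → E) :
    ∫ x in Ioi (0 : ℝ), (m / x ^ 2) • f (m / x) = ∫ x in Ioi (0 : ℝ), f x := by
  conv_rhs => rw [← image_const_div_Ioi_zero hm]
  rw [integral_image_eq_integral_abs_deriv_smul measurableSet_Ioi
    (fun x hx => hasDerivWithinAt_const_div (mem_Ioi.1 hx).ne')
    (involutive_const_div hm.ne').injective.injOn]
  refine setIntegral_congr_fun measurableSet_Ioi fun x hx => ?_
  rw [abs_neg, abs_of_pos (div_pos hm (pow_pos hx 2))]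

lemma integrableOn_Ioi_div_sq_smul_comp_const_div_iff (hm : 0 < m) (f : ℝ → E) :
    IntegrableOn (fun x => (m / x ^ 2) • f (m / x)) (Ioi 0) ↔ IntegrableOn f (Ioi 0) := by
  conv_rhs => rw [← image_const_div_Ioi_zero hm]
  rw [integrableOn_image_iff_integrableOn_abs_deriv_smul measurableSet_Ioi
    (fun x hx => hasDerivWithinAt_const_div (mem_Ioi.1 hx).ne')
    (involutive_const_div hm.ne').injective.injOn]
  refine integrableOn_congr_fun (fun x hx => ?_) measurableSet_Ioi
  rw [abs_neg, abs_of_pos (div_pos hm (pow_pos hx 2))]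

lemma image_sub_const_div_Ioi_zero (hm : 0 < m) : (fun x => x - m / x) '' Ioi (0 : ℝ) = univ := by
  refine eq_univ_of_forall fun y => ?_
  set s := √(y ^ 2 + 4 * m)
  have hs : s ^ 2 = y ^ 2 + 4 * m := sq_sqrt (by positivity)
  have hys : 0 < y + s := by
    have : |y| < s := by rw [← sqrt_sq_eq_abs]; exact sqrt_lt_sqrt (sq_nonneg y) (by linarith)
    linarith [neg_abs_le y]
  refine ⟨(y + s) / 2, half_pos hys, ?_⟩
  field_simp
  nlinarith

lemma strictMonoOn_sub_const_div (hm : 0 < m) : StrictMonoOn (fun x => x - m / x) (Ioi (0 : ℝ)) :=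
  fun _ hx _ _ hxy => sub_lt_sub hxy (div_lt_div_of_pos_left hm hx hxy)

lemma integral_Ioi_one_add_div_sq_smul_comp_sub_const_div (hm : 0 < m) (f : ℝ → E) :
    ∫ x in Ioi (0 : ℝ), (1 + m / x ^ 2) • f (x - m / x) = ∫ x, f x := by
  have hderiv : ∀ x ∈ Ioi (0 : ℝ),
      HasDerivWithinAt (fun x => x - m / x) (1 + m / x ^ 2) (Ioi 0) x :=
    fun x hx =>
      ((hasDerivWithinAt_id x _).sub (hasDerivWithinAt_const_div (mem_Ioi.1 hx).ne')).congr_deriv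
        (sub_neg_eq_add _ _)
  conv_rhs => rw [← setIntegral_univ, ← image_sub_const_div_Ioi_zero hm]
  rw [integral_image_eq_integral_abs_deriv_smul measurableSet_Ioi hderiv
      (strictMonoOn_sub_const_div hm).injOn]
  refine setIntegral_congr_fun measurableSet_Ioi fun x hx => ?_
  rw [abs_of_pos (by positivity)]

lemma integral_Ioi_smul_comp_sq_div {η : ℝ} (hη : 0 < η) (f : ℝ → E) :
    ∫ x in Ioi (0 : ℝ), (2 * x / η) • f (x ^ 2 / η) = ∫ ξ in Ioi (0 : ℝ), f ξ := by
  have h := integral_comp_rpow_Ioi_of_pos (g := fun y => f (η⁻¹ * y)) two_pos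
  rw [integral_comp_mul_left_Ioi f 0 (inv_pos.2 hη), mul_zero, inv_inv] at h
  rw [← inv_smul_smul₀ hη.ne' (∫ ξ in Ioi (0 : ℝ), f ξ), ← h, ← integral_smul]
  refine setIntegral_congr_fun measurableSet_Ioi fun x _ => ?_
  norm_num [smul_smul, div_eq_inv_mul]

end Substitution

section Glasser

variable {m : ℝ}

lemma exp_neg_sq_add_sq_div_sq_comp_const_div (hm : m ≠ 0) (x : ℝ) :
    exp (-((m / x) ^ 2 + m ^ 2 / (m / x) ^ 2)) = exp (-(x ^ 2 + m ^ 2 / x ^ 2)) := by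
  rcases eq_or_ne x 0 with rfl | hx
  · simp
  · field_simp
    ring_nf

lemma integrableOn_exp_neg_sq_add_sq_div_sq (m : ℝ) :
    IntegrableOn (fun x => exp (-(x ^ 2 + m ^ 2 / x ^ 2))) (Ioi 0) := by
  refine ((integrable_exp_neg_mul_sq one_pos).integrableOn).mono'
    (Measurable.aestronglyMeasurable (by fun_prop)) (ae_of_all _ fun x => ?_)
  rw [norm_of_nonneg (exp_pos _).le, neg_one_mul, exp_le_exp, neg_le_neg_iff]
  exact le_add_of_nonneg_right (by positivity)

lemma integrableOn_div_sq_mul_exp_neg_sq_add_sq_div_sq (hm : 0 < m) :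
    IntegrableOn (fun x => m / x ^ 2 * exp (-(x ^ 2 + m ^ 2 / x ^ 2))) (Ioi 0) := by
  have h := (integrableOn_Ioi_div_sq_smul_comp_const_div_iff hm _).2
    (integrableOn_exp_neg_sq_add_sq_div_sq m)
  simpa only [smul_eq_mul, exp_neg_sq_add_sq_div_sq_comp_const_div hm.ne'] using h

lemma integral_Ioi_div_sq_mul_exp_neg_sq_add_sq_div_sq (hm : 0 < m) :
    ∫ x in Ioi (0 : ℝ), m / x ^ 2 * exp (-(x ^ 2 + m ^ 2 / x ^ 2)) =
      ∫ x in Ioi (0 : ℝ), exp (-(x ^ 2 + m ^ 2 / x ^ 2)) := by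
  have h := integral_Ioi_div_sq_smul_comp_const_div hm fun x => exp (-(x ^ 2 + m ^ 2 / x ^ 2))
  simpa only [smul_eq_mul, exp_neg_sq_add_sq_div_sq_comp_const_div hm.ne'] using h

theorem integral_Ioi_exp_neg_sq_add_sq_div_sq (hm : 0 < m) :
    ∫ x in Ioi (0 : ℝ), exp (-(x ^ 2 + m ^ 2 / x ^ 2)) = √π / 2 * exp (-(2 * m)) := by
  set G := ∫ x in Ioi (0 : ℝ), exp (-(x ^ 2 + m ^ 2 / x ^ 2))
  have hsquare : ∀ x ∈ Ioi (0 : ℝ), (1 + m / x ^ 2) • exp (-(x - m / x) ^ 2) =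
      exp (2 * m) * (exp (-(x ^ 2 + m ^ 2 / x ^ 2)) + m / x ^ 2 * exp (-(x ^ 2 + m ^ 2 / x ^ 2))) :=
    fun x hx => by
      have hexp : -(x - m / x) ^ 2 = 2 * m + -(x ^ 2 + m ^ 2 / x ^ 2) := by
        field_simp [(mem_Ioi.1 hx).ne']
        ring
      rw [smul_eq_mul, hexp, exp_add]
      ring
  have hgauss : √π = exp (2 * m) * (G + G) := by
    calc √π = ∫ u, exp (-u ^ 2) := by simpa using (integral_gaussian 1).symm
      _ = ∫ x in Ioi (0 : ℝ), (1 + m / x ^ 2) • exp (-(x - m / x) ^ 2) :=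
        (integral_Ioi_one_add_div_sq_smul_comp_sub_const_div hm _).symm
      _ = exp (2 * m) * (G + G) := by
        rw [setIntegral_congr_fun measurableSet_Ioi hsquare, integral_const_mul,
          integral_add (integrableOn_exp_neg_sq_add_sq_div_sq m)
            (integrableOn_div_sq_mul_exp_neg_sq_add_sq_div_sq hm),
          integral_Ioi_div_sq_mul_exp_neg_sq_add_sq_div_sq hm]
  rw [exp_neg, hgauss]
  field_simp
  ring

theorem integral_Ioi_exp_neg_sq_add_sq_div_sq_div_sq (hm : 0 < m) :
    ∫ x in Ioi (0 : ℝ), exp (-(x ^ 2 + m ^ 2 / x ^ 2)) / x ^ 2 = √π / 2 * (exp (-(2 * m)) / m) := by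
  rw [← mul_div_assoc, ← integral_Ioi_exp_neg_sq_add_sq_div_sq hm,
    ← integral_Ioi_div_sq_mul_exp_neg_sq_add_sq_div_sq hm, eq_div_iff hm.ne', ← integral_mul_const]
  refine setIntegral_congr_fun measurableSet_Ioi fun x _ => ?_
  ring

end Glasser

lemma integral_Ioi_exp_neg_mul_div {a : ℝ} (ha : 0 < a) (c : ℝ) :
    ∫ y in Ioi c, exp (-(a * y)) / y = expInt (a * c) := by
  calc ∫ y in Ioi c, exp (-(a * y)) / y = a * ∫ y in Ioi c, exp (-(a * y)) / (a * y) := by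
        rw [← integral_const_mul]
        refine setIntegral_congr_fun measurableSet_Ioi fun y _ => ?_
        rw [← mul_div_assoc, mul_div_mul_left _ _ ha.ne']
    _ = expInt (a * c) := by
        rw [integral_comp_mul_left_Ioi (fun t => exp (-t) / t) c ha, smul_eq_mul,
          mul_inv_cancel_left₀ ha.ne', expInt]

lemma integrableOn_exp_neg_mul_div {a c : ℝ} (ha : 0 < a) (hc : 0 < c) :
    IntegrableOn (fun y => exp (-(a * y)) / y) (Ioi c) := by
  refine ((exp_neg_integrableOn_Ioi c ha).const_mul c⁻¹).mono'
    (Measurable.aestronglyMeasurable (by fun_prop)) ?_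
  filter_upwards [ae_restrict_mem measurableSet_Ioi] with y hy
  have hy : c < y := hy
  rw [norm_of_nonneg (div_nonneg (exp_pos _).le (hc.trans hy).le), div_eq_inv_mul, neg_mul]
  gcongr

lemma integrable_exp_neg_sq_add_sq_div_sq_div_sq_prod {c : ℝ} (hc : 0 < c) :
    Integrable (fun p : ℝ × ℝ => exp (-(p.1 ^ 2 + p.2 ^ 2 / p.1 ^ 2)) / p.1 ^ 2)
      ((volume.restrict (Ioi 0)).prod (volume.restrict (Ioi c))) := by
  refine (integrable_prod_iff' (Measurable.aestronglyMeasurable (by fun_prop))).2 ⟨?_, ?_⟩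
  · filter_upwards [ae_restrict_mem measurableSet_Ioi] with y hy
    have hy : 0 < y := hc.trans hy
    refine ((integrableOn_div_sq_mul_exp_neg_sq_add_sq_div_sq hy).const_mul y⁻¹).congr
      (ae_of_all _ fun x => ?_)
    field_simp
  · refine ((integrableOn_exp_neg_mul_div two_pos hc).const_mul (√π / 2)).congr ?_
    filter_upwards [ae_restrict_mem measurableSet_Ioi] with y hy
    simp_rw [norm_div, norm_of_nonneg (exp_pos _).le, norm_pow, norm_eq_abs, sq_abs]
    exact (integral_Ioi_exp_neg_sq_add_sq_div_sq_div_sq (hc.trans hy)).symm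

lemma smul_laplace_integrand_comp_sq_div {b η x : ℝ} (hη : 0 < η) (hx : 0 < x) :
    (2 * x / η) • (exp (-η * (x ^ 2 / η)) * ((1 / (2 * (x ^ 2 / η))) *
        ((2 / √π) * ∫ t in Ioi √(b / (2 * (x ^ 2 / η))), exp (-t ^ 2)))) =
      (2 / √π) * ∫ y in Ioi √(b * η / 2), exp (-(x ^ 2 + y ^ 2 / x ^ 2)) / x ^ 2 := by
  have hsqrt : √(b / (2 * (x ^ 2 / η))) = √(b * η / 2) * x⁻¹ := by
    rw [show b / (2 * (x ^ 2 / η)) = b * η / 2 / x ^ 2 by field_simp, sqrt_div' _ (sq_nonneg x),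
      sqrt_sq hx.le, div_eq_mul_inv]
  have htail : ∫ t in Ioi (√(b * η / 2) * x⁻¹), exp (-t ^ 2) =
      x⁻¹ * ∫ y in Ioi √(b * η / 2), exp (-(y * x⁻¹) ^ 2) := by
    rw [integral_comp_mul_right_Ioi (fun t => exp (-t ^ 2)) _ (inv_pos.2 hx), inv_inv, smul_eq_mul,
      inv_mul_cancel_left₀ hx.ne']
  rw [hsqrt, htail, smul_eq_mul]
  simp_rw [← integral_const_mul]
  refine setIntegral_congr_fun measurableSet_Ioi fun y _ => ?_
  have hexp : -(x ^ 2 + y ^ 2 / x ^ 2) = -η * (x ^ 2 / η) + -(y * x⁻¹) ^ 2 := by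
    field_simp
    ring
  rw [hexp, exp_add]
  field_simp

/-- For b > 0 and η > 0, the one-sided Laplace transform of
ξ ↦ (1/(2ξ))·erfc(√(b/(2ξ))) equals E(√(2bη)). -/
theorem laplace_erfc_scaled (b : ℝ) (hb : 0 < b) (η : ℝ) (hη : 0 < η) :
    ∫ ξ in Set.Ioi (0 : ℝ),
        Real.exp (-η * ξ) * ((1 / (2 * ξ)) *
          ((2 / Real.sqrt π) * ∫ t in Set.Ioi (Real.sqrt (b / (2 * ξ))), Real.exp (-t ^ 2))) =
      expInt (Real.sqrt (2 * b * η)) := by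
  set c := √(b * η / 2)
  have hc : 0 < c := sqrt_pos.2 (by positivity)
  have hc2 : √(2 * b * η) = 2 * c := by
    rw [← sqrt_sq (by positivity : (0 : ℝ) ≤ 2 * c), mul_pow, sq_sqrt (by positivity)]
    ring_nf
  rw [← integral_Ioi_smul_comp_sq_div hη, hc2]
  calc _ = ∫ x in Ioi 0, (2 / √π) * ∫ y in Ioi c, exp (-(x ^ 2 + y ^ 2 / x ^ 2)) / x ^ 2 :=
        setIntegral_congr_fun measurableSet_Ioi fun x hx =>
          smul_laplace_integrand_comp_sq_div hη hx
    _ = (2 / √π) * ∫ y in Ioi c, ∫ x in Ioi 0, exp (-(x ^ 2 + y ^ 2 / x ^ 2)) / x ^ 2 := by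
        rw [integral_const_mul,
          integral_integral_swap (integrable_exp_neg_sq_add_sq_div_sq_div_sq_prod hc)]
    _ = (2 / √π) * ∫ y in Ioi c, √π / 2 * (exp (-(2 * y)) / y) := by
        rw [setIntegral_congr_fun measurableSet_Ioi
          fun y hy => integral_Ioi_exp_neg_sq_add_sq_div_sq_div_sq (hc.trans hy)]
    _ = expInt (2 * c) := by
        rw [integral_const_mul, ← mul_assoc, div_mul_div_cancel₀ (sqrt_pos.2 pi_pos).ne',
          div_self two_ne_zero, one_mul, integral_Ioi_exp_neg_mul_div two_pos]
end
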